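/- arXiv:math/0508033 — 3 statements merged into one kernel-verified Lean document; each statement's English description precedes it below -/
import Mathlib

section
/- Let H be a finitely generated group and K a normal subgroup of H with index a power of a prime p. Then d_p(K) - 1 ≤ [H:K] (d_p(H) - 1). -/
open scoped commutatorElement

/-- The (normal) subgroup of `G` generated by all commutators and all `p`-th powers,
i.e. `[G,G]G^p`. -/
def modP (p : ℕ) (G : Type*) [Group G] : Subgroup G :=
  Subgroup.normalClosure ({x | ∃ a b : G, x = ⁅a, b⁆} ∪ {x | ∃ g : G, x = g ^ p})

instance modP_normal (p : ℕ) (G : Type*) [Group G] : (modP p G).Normal :=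
  Subgroup.normalClosure_normal

/-- `dp p G` is the minimal number of generators of `G/([G,G]G^p)`, which for finitely
generated `G` equals `dim_{𝔽_p} H₁(G; 𝔽_p)`. -/
noncomputable def dp (p : ℕ) (G : Type*) [Group G] : ℕ :=
  sInf {n | ∃ S : Finset (G ⧸ modP p G), S.card = n ∧
    Subgroup.closure (S : Set (G ⧸ modP p G)) = ⊤}

open Subgroup

section ModPBasic

variable {p : ℕ} {G : Type*} [Group G]

lemma commutator_mem_modP (a b : G) : ⁅a, b⁆ ∈ modP p G :=
  Subgroup.subset_normalClosure (Or.inl ⟨a, b, rfl⟩)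

lemma pow_mem_modP (g : G) : g ^ p ∈ modP p G :=
  Subgroup.subset_normalClosure (Or.inr ⟨g, rfl⟩)

lemma modP_quot_pow (x : G ⧸ modP p G) : x ^ p = 1 := by
  obtain ⟨g, rfl⟩ := QuotientGroup.mk_surjective x
  rw [← QuotientGroup.mk_pow]
  exact (QuotientGroup.eq_one_iff _).mpr (pow_mem_modP g)

lemma modP_quot_comm (x y : G ⧸ modP p G) : x * y = y * x := by
  obtain ⟨a, rfl⟩ := QuotientGroup.mk_surjective x
  obtain ⟨b, rfl⟩ := QuotientGroup.mk_surjective y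
  rw [← commutatorElement_eq_one_iff_mul_comm]
  exact (QuotientGroup.eq_one_iff _).mpr (commutator_mem_modP a b)

lemma modP_le {M : Subgroup G} [M.Normal] (hcomm : ∀ a b : G, ⁅a, b⁆ ∈ M)
    (hpow : ∀ g : G, g ^ p ∈ M) : modP p G ≤ M := by
  apply Subgroup.normalClosure_le_normal
  rintro x (⟨a, b, rfl⟩ | ⟨g, rfl⟩)
  · exact hcomm a b
  · exact hpow g

lemma map_modP_le {G' : Type*} [Group G'] (f : G →* G') :
    (modP p G).map f ≤ modP p G' := by
  rw [Subgroup.map_le_iff_le_comap]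
  haveI : ((modP p G').comap f).Normal := (modP_normal p G').comap f
  apply modP_le
  · intro a b
    rw [Subgroup.mem_comap, map_commutatorElement]
    exact commutator_mem_modP _ _
  · intro g
    rw [Subgroup.mem_comap, map_pow]
    exact pow_mem_modP _

/-- `dp` is the rank of the mod-p quotient. -/
lemma dp_eq_rank (p : ℕ) (G : Type*) [Group G] [Group.FG (G ⧸ modP p G)] :
    dp p G = Group.rank (G ⧸ modP p G) := by
  apply le_antisymm
  · obtain ⟨S, hS1, hS2⟩ := Group.rank_spec (G ⧸ modP p G)
    exact Nat.sInf_le ⟨S, hS1, hS2⟩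
  · have hne : {n | ∃ S : Finset (G ⧸ modP p G), S.card = n ∧
        Subgroup.closure (S : Set (G ⧸ modP p G)) = ⊤}.Nonempty := by
      obtain ⟨S, hS1, hS2⟩ := Group.rank_spec (G ⧸ modP p G)
      exact ⟨S.card, S, rfl, hS2⟩
    obtain ⟨S, hS1, hS2⟩ := Nat.sInf_mem hne
    rw [dp, ← hS1]
    exact Group.rank_le hS2

/-- A finitely generated group whose mod-p quotient is everything... rather:
the mod-p quotient of a finitely generated group is finite. -/
lemma finite_quot_modP (hp : p.Prime) [Group.FG G] : Finite (G ⧸ modP p G) := by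
  classical
  haveI : NeZero p := ⟨hp.pos.ne'⟩
  haveI : Group.FG (G ⧸ modP p G) :=
    Group.fg_of_surjective (f := QuotientGroup.mk' (modP p G)) (QuotientGroup.mk'_surjective _)
  letI : CommGroup (G ⧸ modP p G) :=
    { (inferInstance : Group (G ⧸ modP p G)) with mul_comm := modP_quot_comm }
  obtain ⟨S, -, hS⟩ := Group.rank_spec (G ⧸ modP p G)
  have hmod : ∀ (x : G ⧸ modP p G) (n : ℕ), x ^ (n % p) = x ^ n := by
    intro x n
    conv_rhs => rw [← Nat.div_add_mod n p]
    rw [pow_add, pow_mul, modP_quot_pow, one_pow, one_mul]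
  set φ : ({y // y ∈ S} → Fin p) → (G ⧸ modP p G) :=
    fun e => ∏ x ∈ S.attach, x.1 ^ (e x : ℕ) with hφ
  suffices h : Function.Surjective φ from Finite.of_surjective φ h
  intro q
  have hq : q ∈ Subgroup.closure (S : Set (G ⧸ modP p G)) := by rw [hS]; trivial
  induction hq using Subgroup.closure_induction with
  | mem x hx =>
      refine ⟨fun y => if y = ⟨x, hx⟩ then 1 else 0, ?_⟩
      simp only [hφ]
      rw [Finset.prod_eq_single_of_mem (⟨x, hx⟩ : {y // y ∈ S}) (S.mem_attach _)]
      · simp [Fin.val_one', Nat.mod_eq_of_lt hp.one_lt]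
      · intro b _ hb
        simp [hb]
  | one => exact ⟨0, by simp [hφ]⟩
  | mul a b _ _ ha hb =>
      obtain ⟨e, rfl⟩ := ha
      obtain ⟨f, rfl⟩ := hb
      refine ⟨e + f, ?_⟩
      simp only [hφ]
      calc ∏ y ∈ S.attach, y.1 ^ (((e + f) y : Fin p) : ℕ)
          = ∏ y ∈ S.attach, (y.1 ^ (e y : ℕ) * y.1 ^ (f y : ℕ)) := by
            refine Finset.prod_congr rfl fun y _ => ?_
            rw [Pi.add_apply, Fin.val_add, hmod, pow_add]
        _ = _ := Finset.prod_mul_distrib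
  | inv a _ ha =>
      obtain ⟨e, rfl⟩ := ha
      refine ⟨-e, ?_⟩
      simp only [hφ]
      rw [show (φ e)⁻¹ = ∏ y ∈ S.attach, (y.1 ^ (e y : ℕ))⁻¹ by
        simp only [hφ]; rw [← Finset.prod_inv_distrib]]
      refine Finset.prod_congr rfl fun y _ => ?_
      refine eq_inv_of_mul_eq_one_left ?_
      rw [← pow_add, ← hmod, ← Fin.val_add, Pi.neg_apply, neg_add_cancel, Fin.val_zero, pow_zero]

lemma map_modP {G' : Type*} [Group G'] (f : G →* G') (hf : Function.Surjective f) :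
    (modP p G).map f = modP p G' := by
  unfold modP
  rw [Subgroup.map_normalClosure _ _ hf]
  congr 1
  ext x
  simp only [Set.image_union, Set.mem_union, Set.mem_image, Set.mem_setOf_eq]
  constructor
  · rintro (⟨y, ⟨a, b, rfl⟩, rfl⟩ | ⟨y, ⟨g, rfl⟩, rfl⟩)
    · exact Or.inl ⟨f a, f b, map_commutatorElement f a b⟩
    · exact Or.inr ⟨f g, map_pow f g p⟩
  · rintro (⟨a, b, rfl⟩ | ⟨g, rfl⟩)
    · obtain ⟨a', rfl⟩ := hf a
      obtain ⟨b', rfl⟩ := hf b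
      exact Or.inl ⟨⁅a', b'⁆, ⟨a', b', rfl⟩, map_commutatorElement f a' b'⟩
    · obtain ⟨g', rfl⟩ := hf g
      exact Or.inr ⟨g' ^ p, ⟨g', rfl⟩, map_pow f g' p⟩

end ModPBasic

section PGroup

variable {p : ℕ} {G : Type*} [Group G]

/-- A maximal (proper) subgroup of a finite p-group is normal of index p. -/
lemma coatom_normal_index_p (hp : p.Prime) [Finite G] (hG : IsPGroup p G)
    {M : Subgroup G} (hM : IsCoatom M) : M.Normal ∧ M.index = p := by
  haveI : Fact p.Prime := ⟨hp⟩
  haveI hnil : Group.IsNilpotent G := hG.isNilpotent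
  have hlt : M < Subgroup.normalizer (M : Set G) :=
    normalizerCondition_of_isNilpotent M (lt_top_iff_ne_top.mpr hM.1)
  have hnorm : Subgroup.normalizer (M : Set G) = ⊤ := hM.2 _ hlt
  haveI hMn : M.Normal := Subgroup.normalizer_eq_top_iff.mp hnorm
  refine ⟨hMn, ?_⟩
  have hidx : M.index = Nat.card (G ⧸ M) := rfl
  have hdvd : M.index ∣ Nat.card G := Subgroup.index_dvd_card M
  obtain ⟨n, hn⟩ := IsPGroup.iff_card.mp hG
  have hne1 : M.index ≠ 1 := fun h => hM.1 (Subgroup.index_eq_one.mp h)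
  have hpdvd : p ∣ Nat.card (G ⧸ M) := by
    rw [← hidx]
    rw [hn] at hdvd
    obtain ⟨i, hi, hie⟩ := (Nat.dvd_prime_pow hp).mp hdvd
    cases i with
    | zero => rw [hie] at hne1; simp at hne1
    | succ i => rw [hie]; exact dvd_pow_self p (Nat.succ_ne_zero i)
  obtain ⟨g, hg⟩ := exists_prime_orderOf_dvd_card' p hpdvd
  set L := Subgroup.comap (QuotientGroup.mk' M) (Subgroup.zpowers g) with hL
  have hML : M ≤ L := by
    intro x hx
    have : QuotientGroup.mk' M x = 1 := (QuotientGroup.eq_one_iff x).mpr hx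
    simp only [hL, Subgroup.mem_comap, this]
    exact Subgroup.one_mem _
  have hmapL := Subgroup.map_comap_eq_self_of_surjective
    (QuotientGroup.mk'_surjective M) (Subgroup.zpowers g)
  have hLtop : L = ⊤ := by
    rcases eq_or_lt_of_le hML with h | h
    · exfalso
      rw [← hL, ← h, QuotientGroup.map_mk'_self] at hmapL
      rw [eq_comm, Subgroup.zpowers_eq_bot] at hmapL
      rw [hmapL, orderOf_one] at hg
      exact hp.one_lt.ne' hg.symm
    · exact hM.2 _ h
  have htop : Subgroup.zpowers g = ⊤ := by
    rw [← hL, hLtop, Subgroup.map_top_of_surjective _ (QuotientGroup.mk'_surjective M)] at hmapL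
    exact hmapL.symm
  rw [hidx, ← Subgroup.card_top, ← htop, Nat.card_zpowers, hg]

lemma modP_le_of_index_p (hp : p.Prime) {M : Subgroup G} [M.Normal] (hM : M.index = p) :
    modP p G ≤ M := by
  haveI : Fact p.Prime := ⟨hp⟩
  have hcard : Nat.card (G ⧸ M) = p := hM
  haveI : Finite (G ⧸ M) := Nat.finite_of_card_ne_zero (by rw [hcard]; exact hp.pos.ne')
  haveI : IsCyclic (G ⧸ M) := isCyclic_of_prime_card hcard
  have hcomm : ∀ x y : G ⧸ M, x * y = y * x := fun x y => by
    letI := IsCyclic.commGroup (α := G ⧸ M)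
    exact mul_comm x y
  apply modP_le
  · intro a b
    rw [← QuotientGroup.eq_one_iff]
    show ⁅(a : G ⧸ M), (b : G ⧸ M)⁆ = 1
    exact commutatorElement_eq_one_iff_mul_comm.mpr (hcomm _ _)
  · intro g
    rw [← QuotientGroup.eq_one_iff]
    show ((g : G ⧸ M)) ^ p = 1
    rw [← hcard]
    exact pow_card_eq_one'

/-- Burnside basis theorem, one inequality. -/
lemma rank_le_rank_modP (hp : p.Prime) [Finite G] (hG : IsPGroup p G) :
    Group.rank G ≤ Group.rank (G ⧸ modP p G) := by
  classical
  obtain ⟨S, hScard, hSclos⟩ := Group.rank_spec (G ⧸ modP p G)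
  have hsurj : ∀ x : G ⧸ modP p G, ∃ g : G, QuotientGroup.mk' (modP p G) g = x :=
    fun x => QuotientGroup.mk'_surjective _ x
  choose f hf using hsurj
  set T : Finset G := S.image f with hT
  have himg : (QuotientGroup.mk' (modP p G)) '' (T : Set G) = (S : Set (G ⧸ modP p G)) := by
    rw [hT, Finset.coe_image, ← Set.image_comp]
    have : ∀ x ∈ (S : Set (G ⧸ modP p G)), (QuotientGroup.mk' (modP p G) ∘ f) x = x :=
      fun x _ => hf x
    rw [Set.image_congr this, Set.image_id']
  have hTtop : Subgroup.closure (T : Set G) = ⊤ := by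
    by_contra hne
    obtain ⟨M, hM, hle⟩ :=
      (eq_top_or_exists_le_coatom (Subgroup.closure (T : Set G))).resolve_left hne
    obtain ⟨hMnormal, hMindex⟩ := coatom_normal_index_p hp hG hM
    haveI := hMnormal
    have hmodle : modP p G ≤ M := modP_le_of_index_p hp hMindex
    have hmap : (Subgroup.closure (T : Set G)).map (QuotientGroup.mk' (modP p G)) = ⊤ := by
      rw [MonoidHom.map_closure, himg, hSclos]
    have h1 := Subgroup.comap_map_eq (QuotientGroup.mk' (modP p G))
      (Subgroup.closure (T : Set G))
    rw [hmap, Subgroup.comap_top, QuotientGroup.ker_mk'] at h1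
    have : (⊤ : Subgroup G) ≤ M := by
      rw [h1]
      exact sup_le hle hmodle
    exact hM.1 (top_le_iff.mp this)
  calc Group.rank G ≤ T.card := Group.rank_le hTtop
    _ ≤ S.card := Finset.card_image_le
    _ = _ := hScard

end PGroup

section Schreier

variable {p : ℕ} {G : Type*} [Group G]

/-- Schreier-type bound for a normal subgroup of prime index. -/
lemma rank_step (hp : p.Prime) [Finite G] (K : Subgroup G) [K.Normal]
    (hK : K.index = p) : Group.rank K + p ≤ p * Group.rank G + 1 := by
  classical
  haveI : Fact p.Prime := ⟨hp⟩
  obtain ⟨S, hScard, hSclos⟩ := Group.rank_spec G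
  have hKtop : K ≠ ⊤ := by
    intro h
    rw [h, Subgroup.index_top] at hK
    exact hp.one_lt.ne hK
  obtain ⟨s, hsS, hsK⟩ : ∃ s ∈ S, s ∉ K := by
    by_contra h
    push_neg at h
    exact hKtop (top_le_iff.mp (hSclos ▸ (Subgroup.closure_le K).mpr h))
  have hcard : Nat.card (G ⧸ K) = p := hK
  have hspow : ∀ x : G ⧸ K, x ^ p = 1 := fun x => by rw [← hcard]; exact pow_card_eq_one'
  haveI : Finite (G ⧸ K) := Nat.finite_of_card_ne_zero (by rw [hcard]; exact hp.pos.ne')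
  set π := QuotientGroup.mk' K with hπ
  have hs1 : π s ≠ 1 := fun h => hsK ((QuotientGroup.eq_one_iff s).mp h)
  have hords : orderOf (π s) = p := orderOf_eq_prime (hspow _) hs1
  have hzp : Subgroup.zpowers (π s) = ⊤ :=
    Subgroup.eq_top_of_card_eq _ (by rw [Nat.card_zpowers, hords, hcard])
  have hexp : ∀ x : G, ∃ mx : ℕ, π x = (π s) ^ mx := by
    intro x
    have hx : π x ∈ Submonoid.powers (π s) := by
      rw [mem_powers_iff_mem_zpowers, hzp]; trivial
    obtain ⟨mx, hmx⟩ := (Submonoid.mem_powers_iff _ _).mp hx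
    exact ⟨mx, hmx.symm⟩
  choose m hm using hexp
  set f : G → G := fun x => x * (s ^ m x)⁻¹ with hfdef
  have hfK : ∀ x, f x ∈ K := by
    intro x
    have h1 : π (f x) = 1 := by
      rw [hfdef]
      simp only [map_mul, map_inv, map_pow]
      rw [show (π s) ^ m x = π x from (hm x).symm]
      group
    exact (QuotientGroup.eq_one_iff _).mp h1
  set T : Finset G := (S.erase s).image f with hT
  set F : Finset G := insert (s ^ p)
      (((Finset.range p) ×ˢ T).image fun q => s ^ q.1 * q.2 * (s ^ q.1)⁻¹) with hF
  set N := Subgroup.closure (F : Set G) with hN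
  have hspN : s ^ p ∈ N := Subgroup.subset_closure
    (Finset.mem_coe.mpr (by rw [hF]; exact Finset.mem_insert_self _ _))
  have hmemF : ∀ i, i < p → ∀ y ∈ T, s ^ i * y * (s ^ i)⁻¹ ∈ N := by
    intro i hi y hy
    apply Subgroup.subset_closure
    apply Finset.mem_coe.mpr
    rw [hF]
    apply Finset.mem_insert_of_mem
    exact Finset.mem_image.mpr ⟨(i, y),
      Finset.mem_product.mpr ⟨Finset.mem_range.mpr hi, hy⟩, rfl⟩
  have hTN : ∀ y ∈ T, y ∈ N := by
    intro y hy
    have := hmemF 0 hp.pos y hy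
    simpa using this
  have hspK : s ^ p ∈ K := by
    have h1 : π (s ^ p) = 1 := by rw [map_pow]; exact hspow _
    exact (QuotientGroup.eq_one_iff _).mp h1
  have hTK : ∀ y ∈ T, y ∈ K := by
    intro y hy
    obtain ⟨x, -, rfl⟩ := Finset.mem_image.mp hy
    exact hfK x
  have hgen : Subgroup.closure (insert s (T : Set G)) = ⊤ := by
    rw [eq_top_iff, ← hSclos, Subgroup.closure_le]
    intro x hx
    by_cases hxs : x = s
    · subst hxs; exact Subgroup.subset_closure (Set.mem_insert _ _)
    · have hxT : f x ∈ T := by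
        rw [hT]
        exact Finset.mem_image_of_mem f (Finset.mem_erase.mpr ⟨hxs, hx⟩)
      have hxeq : x = f x * s ^ m x := by rw [hfdef]; group
      rw [SetLike.mem_coe, hxeq]
      exact Subgroup.mul_mem _
        (Subgroup.subset_closure (Set.mem_insert_of_mem _ (Finset.mem_coe.mpr hxT)))
        (Subgroup.pow_mem _ (Subgroup.subset_closure (Set.mem_insert _ _)) _)
  have hconj : ∀ t : G, (∀ g ∈ F, t * g * t⁻¹ ∈ N) → ∀ g ∈ N, t * g * t⁻¹ ∈ N := by
    intro t ht g hg
    have hmap : N.map (MulAut.conj t).toMonoidHom ≤ N := by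
      rw [hN, MonoidHom.map_closure, Subgroup.closure_le]
      rintro _ ⟨x, hx, rfl⟩
      simpa using ht x (Finset.mem_coe.mp hx)
    have h2 : (MulAut.conj t).toMonoidHom g ∈ N := hmap ⟨g, hg, rfl⟩
    simpa using h2
  have hsF : ∀ g ∈ F, s * g * s⁻¹ ∈ N := by
    intro g hg
    rw [hF] at hg
    rcases Finset.mem_insert.mp hg with rfl | hg
    · rw [show s * s ^ p * s⁻¹ = s ^ p by group]
      exact hspN
    · obtain ⟨⟨i, y⟩, hmem, rfl⟩ := Finset.mem_image.mp hg
      obtain ⟨hi, hy⟩ := Finset.mem_product.mp hmem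
      rw [Finset.mem_range] at hi
      rw [show s * (s ^ i * y * (s ^ i)⁻¹) * s⁻¹ = s ^ (i + 1) * y * (s ^ (i + 1))⁻¹ by group]
      by_cases hip : i + 1 < p
      · exact hmemF (i + 1) hip y hy
      · have hieq : i + 1 = p := by omega
        rw [hieq]
        exact Subgroup.mul_mem _ (Subgroup.mul_mem _ hspN (hTN y hy)) (Subgroup.inv_mem _ hspN)
  have hsF' : ∀ g ∈ F, s⁻¹ * g * s ∈ N := by
    intro g hg
    rw [hF] at hg
    rcases Finset.mem_insert.mp hg with rfl | hg
    · rw [show s⁻¹ * s ^ p * s = s ^ p by group]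
      exact hspN
    · obtain ⟨⟨i, y⟩, hmem, rfl⟩ := Finset.mem_image.mp hg
      obtain ⟨hi, hy⟩ := Finset.mem_product.mp hmem
      rw [Finset.mem_range] at hi
      cases i with
      | zero =>
        obtain ⟨j, hj⟩ : ∃ j, p = j + 1 := ⟨p - 1, by omega⟩
        have hjp : j < p := by omega
        rw [show s⁻¹ * (s ^ 0 * y * (s ^ 0)⁻¹) * s =
            (s ^ (j + 1))⁻¹ * (s ^ j * y * (s ^ j)⁻¹) * s ^ (j + 1) by group]
        rw [← hj]
        exact Subgroup.mul_mem _
          (Subgroup.mul_mem _ (Subgroup.inv_mem _ hspN) (hmemF j hjp y hy)) hspN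
      | succ j =>
        rw [show s⁻¹ * (s ^ (j + 1) * y * (s ^ (j + 1))⁻¹) * s = s ^ j * y * (s ^ j)⁻¹ by group]
        exact hmemF j (by omega) y hy
  haveI hNnormal : N.Normal := by
    rw [← Subgroup.normalizer_eq_top_iff, eq_top_iff, ← hgen, Subgroup.closure_le]
    intro x hx
    rcases Set.mem_insert_iff.mp hx with rfl | hxT
    · rw [SetLike.mem_coe, Subgroup.mem_normalizer_iff]
      intro g
      constructor
      · exact fun hg => hconj x hsF g hg
      · intro hg
        have h3 := hconj x⁻¹ (fun g hg => by rw [inv_inv]; exact hsF' g hg) _ hg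
        rwa [show x⁻¹ * (x * g * x⁻¹) * x⁻¹⁻¹ = g by group] at h3
    · exact SetLike.mem_coe.mpr (Subgroup.le_normalizer (hTN x (Finset.mem_coe.mp hxT)))
  have hNK : N ≤ K := by
    rw [hN, Subgroup.closure_le]
    intro g hg
    rw [Finset.mem_coe, hF] at hg
    rcases Finset.mem_insert.mp hg with rfl | hg
    · exact hspK
    · obtain ⟨⟨i, y⟩, hmem, rfl⟩ := Finset.mem_image.mp hg
      obtain ⟨-, hy⟩ := Finset.mem_product.mp hmem
      exact ‹K.Normal›.conj_mem y (hTK y hy) (s ^ i)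
  have h2 : (⊤ : Subgroup (G ⧸ N)) ≤ Subgroup.zpowers (QuotientGroup.mk' N s) := by
    rw [← Subgroup.map_top_of_surjective _ (QuotientGroup.mk'_surjective N), ← hgen,
      MonoidHom.map_closure, Subgroup.closure_le]
    rintro _ ⟨x, hx, rfl⟩
    rcases Set.mem_insert_iff.mp hx with rfl | hxT
    · exact SetLike.mem_coe.mpr (Subgroup.mem_zpowers _)
    · have h4 : QuotientGroup.mk' N x = 1 :=
        (QuotientGroup.eq_one_iff _).mpr (hTN x (Finset.mem_coe.mp hxT))
      rw [SetLike.mem_coe, h4]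
      exact Subgroup.one_mem _
  have h3 : Subgroup.zpowers (QuotientGroup.mk' N s) = ⊤ := top_le_iff.mp h2
  have hNindex : N.index ∣ p := by
    have h5 : N.index = Nat.card (G ⧸ N) := rfl
    rw [h5, ← Subgroup.card_top, ← h3, Nat.card_zpowers]
    apply orderOf_dvd_of_pow_eq_one
    rw [← map_pow]
    exact (QuotientGroup.eq_one_iff _).mpr hspN
  have hKN : K ≤ N := by
    have h4 : N.index = p := Nat.dvd_antisymm hNindex (hK ▸ Subgroup.index_dvd_of_le hNK)
    have h5 := Subgroup.relIndex_mul_index hNK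
    rw [h4, hK] at h5
    have h6 : N.relIndex K = 1 :=
      Nat.eq_of_mul_eq_mul_right hp.pos (by rw [h5, one_mul])
    exact Subgroup.relIndex_eq_one.mp h6
  have hKeq : K = Subgroup.closure (F : Set G) := le_antisymm (hN ▸ hKN) (hN ▸ hNK)
  have hrk : Group.rank K ≤ F.card := by
    rw [Subgroup.rank_congr hKeq]
    exact Subgroup.rank_closure_finset_le_card F
  have hFcard : F.card ≤ 1 + p * (S.card - 1) := by
    rw [hF]
    refine (Finset.card_insert_le _ _).trans ?_
    have h7 : (((Finset.range p) ×ˢ T).image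
        fun q => s ^ q.1 * q.2 * (s ^ q.1)⁻¹).card ≤ p * (S.card - 1) := by
      refine Finset.card_image_le.trans ?_
      rw [Finset.card_product, Finset.card_range]
      refine Nat.mul_le_mul_left p ?_
      rw [hT]
      refine Finset.card_image_le.trans ?_
      rw [Finset.card_erase_of_mem hsS]
    omega
  have hrank1 : 1 ≤ Group.rank G := by
    rcases Nat.eq_zero_or_pos (Group.rank G) with h | h
    · exfalso
      have hS0 : S = ∅ := Finset.card_eq_zero.mp (by omega)
      rw [hS0] at hSclos
      simp only [Finset.coe_empty, Subgroup.closure_empty] at hSclos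
      have h8 : s ∈ (⊥ : Subgroup G) := by rw [hSclos]; trivial
      rw [Subgroup.mem_bot] at h8
      exact hsK (h8 ▸ K.one_mem)
    · exact h
  have hmul : p * (Group.rank G - 1) + p = p * Group.rank G := by
    obtain ⟨e, he⟩ : ∃ e, Group.rank G = e + 1 := ⟨Group.rank G - 1, by omega⟩
    rw [he, Nat.add_sub_cancel, mul_add, mul_one]
  calc Group.rank K + p ≤ (1 + p * (S.card - 1)) + p :=
        Nat.add_le_add_right (hrk.trans hFcard) p
    _ = 1 + (p * (Group.rank G - 1) + p) := by rw [hScard]; ring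
    _ = 1 + p * Group.rank G := by rw [hmul]
    _ = p * Group.rank G + 1 := by ring

/-- Iterated Schreier bound along a chain. -/
lemma rank_chain (p : ℕ) (hp : p.Prime) :
    ∀ (k : ℕ) (G : Type*) [Group G] [Finite G] (K : Subgroup G) [K.Normal],
      K.index = p ^ k → Group.rank K + p ^ k ≤ p ^ k * Group.rank G + 1 := by
  intro k
  induction k with
  | zero =>
    intro G _ _ K _ hK
    rw [pow_zero] at hK ⊢
    have hKtop : K = ⊤ := Subgroup.index_eq_one.mp hK
    subst hKtop
    rw [Group.rank_congr Subgroup.topEquiv, one_mul]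
  | succ k ih =>
    intro G _ _ K _ hK
    haveI : Fact p.Prime := ⟨hp⟩
    have hQcard : Nat.card (G ⧸ K) = p ^ (k + 1) := hK
    haveI : Finite (G ⧸ K) := Nat.finite_of_card_ne_zero
      (by rw [hQcard]; exact pow_ne_zero _ hp.pos.ne')
    haveI : Nontrivial (G ⧸ K) := Finite.one_lt_card_iff_nontrivial.mp
      (by rw [hQcard]; exact Nat.one_lt_pow (Nat.succ_ne_zero k) hp.one_lt)
    obtain ⟨M, hM, -⟩ :=
      (eq_top_or_exists_le_coatom (⊥ : Subgroup (G ⧸ K))).resolve_left bot_ne_top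
    obtain ⟨hMnormal, hMindex⟩ := coatom_normal_index_p hp (IsPGroup.of_card hQcard) hM
    haveI := hMnormal
    set L := Subgroup.comap (QuotientGroup.mk' K) M with hL
    haveI : L.Normal := hMnormal.comap _
    have hKL : K ≤ L := by
      intro x hx
      rw [hL, Subgroup.mem_comap]
      have h0 : (QuotientGroup.mk' K) x = 1 := (QuotientGroup.eq_one_iff x).mpr hx
      rw [h0]
      exact M.one_mem
    have hLindex : L.index = p := by
      rw [hL, Subgroup.index_comap_of_surjective _ (QuotientGroup.mk'_surjective K), hMindex]
    have hrel : (K.subgroupOf L).index = p ^ k := by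
      have h5 := Subgroup.relIndex_mul_index hKL
      rw [hLindex, hK, pow_succ] at h5
      exact Nat.eq_of_mul_eq_mul_right hp.pos h5
    have step := rank_step hp L hLindex
    have hih := ih L (K.subgroupOf L) hrel
    rw [Group.rank_congr (Subgroup.subgroupOfEquivOfLe hKL)] at hih
    have h6 : p ^ k * Group.rank L + p ^ (k + 1) ≤ p ^ (k + 1) * Group.rank G + p ^ k := by
      calc p ^ k * Group.rank L + p ^ (k + 1)
          = p ^ k * (Group.rank L + p) := by rw [mul_add, pow_succ]
        _ ≤ p ^ k * (p * Group.rank G + 1) := Nat.mul_le_mul_left _ step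
        _ = p ^ (k + 1) * Group.rank G + p ^ k := by
            rw [mul_add, mul_one, ← mul_assoc, ← pow_succ]
    have h8 : Group.rank K + p ^ (k + 1) + p ^ k ≤ p ^ (k + 1) * Group.rank G + 1 + p ^ k := by
      calc Group.rank K + p ^ (k + 1) + p ^ k
          = (Group.rank K + p ^ k) + p ^ (k + 1) := by ring
        _ ≤ (p ^ k * Group.rank L + 1) + p ^ (k + 1) := Nat.add_le_add_right hih _
        _ = (p ^ k * Group.rank L + p ^ (k + 1)) + 1 := by ring
        _ ≤ (p ^ (k + 1) * Group.rank G + p ^ k) + 1 := Nat.add_le_add_right h6 _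
        _ = p ^ (k + 1) * Group.rank G + 1 + p ^ k := by ring
    exact Nat.le_of_add_le_add_right h8

end Schreier

/-- If `H` is finitely generated and `K ⊴ H` has index a power of the prime `p`, then
`d_p(K) - 1 ≤ [H:K] (d_p(H) - 1)`. -/
theorem dp_sub_one_le_index_mul_dp_sub_one (H : Type*) [Group H] (hH : Group.FG H)
    (p : ℕ) (hp : p.Prime) (K : Subgroup H) [K.Normal] (k : ℕ)
    (hindex : K.index = p ^ k) :
    (dp p K : ℤ) - 1 ≤ (K.index : ℤ) * ((dp p H : ℤ) - 1) := by
  classical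
  haveI : Fact p.Prime := ⟨hp⟩
  haveI : Group.FG H := hH
  haveI : K.FiniteIndex := ⟨by rw [hindex]; exact pow_ne_zero _ hp.pos.ne'⟩
  haveI : Group.FG ↥K := Subgroup.fg_of_index_ne_zero K
  have hcomm_coe : ∀ a b : ↥K, (⁅(a : H), (b : H)⁆ : H) = ((⁅a, b⁆ : ↥K) : H) := by
    intro a b
    simp [commutatorElement_def]
  have hpow_coe : ∀ g : ↥K, ((g : H) ^ p : H) = ((g ^ p : ↥K) : H) := by
    intro g
    norm_cast
  set X : Set H :=
    {x | ∃ a b : ↥K, x = ⁅(a : H), (b : H)⁆} ∪ {x | ∃ g : ↥K, x = (g : H) ^ p} with hX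
  set N : Subgroup H := Subgroup.normalClosure X with hNdef
  haveI hNnormal : N.Normal := Subgroup.normalClosure_normal
  have hXK : X ⊆ (K : Set H) := by
    rintro x (⟨a, b, rfl⟩ | ⟨g, rfl⟩)
    · rw [hcomm_coe a b]
      exact (⁅a, b⁆ : ↥K).2
    · rw [hpow_coe g]
      exact ((g : ↥K) ^ p).2
  have hNK : N ≤ K := Subgroup.normalClosure_le_normal hXK
  set M : Subgroup H := (modP p ↥K).map K.subtype with hMdef
  have hXM : X ⊆ (M : Set H) := by
    rintro x (⟨a, b, rfl⟩ | ⟨g, rfl⟩)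
    · exact ⟨⁅a, b⁆, commutator_mem_modP a b, (hcomm_coe a b).symm⟩
    · exact ⟨g ^ p, pow_mem_modP g, (hpow_coe g).symm⟩
  haveI hMnormal : M.Normal := by
    constructor
    intro n hn g
    rw [hMdef] at hn ⊢
    obtain ⟨m, hm, rfl⟩ := hn
    set e : MulAut ↥K := MulAut.conjNormal g with hedef
    have hem : e m ∈ modP p ↥K := map_modP_le e.toMonoidHom ⟨m, hm, rfl⟩
    exact ⟨e m, hem, MulAut.conjNormal_apply g m⟩
  have hMN : M ≤ N := by
    rw [hMdef, Subgroup.map_le_iff_le_comap]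
    haveI : (N.comap K.subtype).Normal := hNnormal.comap _
    apply modP_le
    · intro a b
      rw [Subgroup.mem_comap]
      apply Subgroup.subset_normalClosure
      exact Or.inl ⟨a, b, (hcomm_coe a b).symm.trans rfl⟩
    · intro g
      rw [Subgroup.mem_comap]
      apply Subgroup.subset_normalClosure
      exact Or.inr ⟨g, (hpow_coe g).symm.trans rfl⟩
  have hNM : N = M := le_antisymm (Subgroup.normalClosure_le_normal hXM) hMN
  set f := (QuotientGroup.mk' N).comp K.subtype with hfdef
  have hker : f.ker = modP p ↥K := by
    rw [hfdef, ← MonoidHom.comap_ker, QuotientGroup.ker_mk', hNM, hMdef,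
      Subgroup.comap_map_eq_self_of_injective K.subtype_injective]
  haveI hfin1 : Finite (↥K ⧸ modP p ↥K) := finite_quot_modP hp
  have iso1 : (↥K ⧸ modP p ↥K) ≃* f.range :=
    (QuotientGroup.quotientMulEquivOfEq hker.symm).trans (QuotientGroup.quotientKerEquivRange f)
  have hrange : f.range = K.map (QuotientGroup.mk' N) := by
    rw [hfdef, MonoidHom.range_comp, Subgroup.range_subtype]
  haveI hfin2 : Finite ↥f.range := Finite.of_equiv _ iso1.toEquiv
  have hrindex : f.range.index = p ^ k := by
    have h11 : (QuotientGroup.mk' N).ker ≤ K := by rw [QuotientGroup.ker_mk']; exact hNK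
    rw [hrange, K.index_map_eq (QuotientGroup.mk'_surjective N) h11, hindex]
  haveI hfinG : Finite (H ⧸ N) := by
    have h9 : Finite ((H ⧸ N) ⧸ f.range) := Nat.finite_of_card_ne_zero (by
      have h10 : f.range.index = Nat.card ((H ⧸ N) ⧸ f.range) := rfl
      rw [← h10, hrindex]
      exact pow_ne_zero _ hp.pos.ne')
    exact Finite.of_equiv _ (Subgroup.groupEquivQuotientProdSubgroup (s := f.range)).symm
  haveI : (K.map (QuotientGroup.mk' N)).Normal :=
    Subgroup.Normal.map ‹K.Normal› _ (QuotientGroup.mk'_surjective N)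
  haveI : f.range.Normal := hrange ▸ (inferInstance : (K.map (QuotientGroup.mk' N)).Normal)
  have hchain := rank_chain p hp k (H ⧸ N) f.range hrindex
  have hdpK : dp p ↥K = Group.rank f.range := by
    rw [dp_eq_rank]
    exact Group.rank_congr iso1
  have hpKbar : IsPGroup p (↥K ⧸ modP p ↥K) := fun x =>
    ⟨1, by rw [pow_one]; exact modP_quot_pow x⟩
  have hprange : IsPGroup p ↥f.range := fun x => by
    obtain ⟨y, rfl⟩ := iso1.surjective x
    obtain ⟨n, hn⟩ := hpKbar y
    exact ⟨n, by rw [← map_pow, hn, map_one]⟩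
  obtain ⟨a, ha⟩ := IsPGroup.iff_card.mp hprange
  have hGcard : Nat.card (H ⧸ N) = p ^ (a + k) := by
    rw [← Subgroup.card_mul_index (H := f.range), ha, hrindex, pow_add]
  have hpG : IsPGroup p (H ⧸ N) := IsPGroup.of_card hGcard
  have hburn := rank_le_rank_modP hp hpG
  have hNle : N ≤ modP p H := by
    apply Subgroup.normalClosure_le_normal
    rintro x (⟨a, b, rfl⟩ | ⟨g, rfl⟩)
    · exact commutator_mem_modP _ _
    · exact pow_mem_modP _
  have hmodmap : (modP p H).map (QuotientGroup.mk' N) = modP p (H ⧸ N) :=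
    map_modP _ (QuotientGroup.mk'_surjective N)
  have iso2 : ((H ⧸ N) ⧸ modP p (H ⧸ N)) ≃* (H ⧸ modP p H) :=
    (QuotientGroup.quotientMulEquivOfEq hmodmap.symm).trans
      (QuotientGroup.quotientQuotientEquivQuotient _ (modP p H) hNle)
  haveI : Group.FG (H ⧸ modP p H) :=
    Group.fg_of_surjective (f := QuotientGroup.mk' (modP p H)) (QuotientGroup.mk'_surjective _)
  have hdpH : dp p H = Group.rank ((H ⧸ N) ⧸ modP p (H ⧸ N)) := by
    rw [dp_eq_rank]
    exact (Group.rank_congr iso2).symm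
  have hfinal : dp p ↥K + p ^ k ≤ p ^ k * dp p H + 1 := by
    rw [hdpK, hdpH]
    calc Group.rank ↥f.range + p ^ k ≤ p ^ k * Group.rank (H ⧸ N) + 1 := hchain
      _ ≤ p ^ k * Group.rank ((H ⧸ N) ⧸ modP p (H ⧸ N)) + 1 :=
          Nat.add_le_add_right (Nat.mul_le_mul_left _ hburn) 1
  rw [hindex]
  have hcast : (dp p ↥K : ℤ) + (p : ℤ) ^ k ≤ (p : ℤ) ^ k * dp p H + 1 := by
    exact_mod_cast hfinal
  push_cast
  nlinarith [hcast]
end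

section
/- Let G be a finitely generated group, p a prime, and suppose G has an infinite nested sequence {G_i} of finite-index subgroups with inf_i d_p(G_i)/[G:G_i] > 0, and such that the indices [G_i : G_{i+1}] are bounded above by a constant k independent of i. Then G has at least exponential subgroup growth: there is a constant c > 1 such that s_n(G) ≥ c^n for all sufficiently large n, where s_n(G) is the number of subgroups of G of index at most n. -/
open scoped commutatorElement
/-- `sn G n`: the number of subgroups of `G` of (finite) index at most `n`. -/
noncomputable def sn (G : Type*) [Group G] (n : ℕ) : ℕ :=
  Nat.card {K : Subgroup G // K.index ≠ 0 ∧ K.index ≤ n}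


lemma finite_monoidHom {G P : Type*} [Group G] [Monoid P] [Finite P] (hG : Group.FG G) :
    Finite (G →* P) := by
  obtain ⟨S, hS⟩ := hG.1
  apply Finite.of_injective (fun f : G →* P => fun x : (S : Set G) => f x)
  intro f g h
  refine MonoidHom.eq_of_eqOn_dense hS ?_
  intro x hx
  exact congrFun h ⟨x, hx⟩

lemma finite_subgroup_index_le {G : Type*} [Group G] (hG : Group.FG G) (n : ℕ) :
    Finite {K : Subgroup G // K.index ≠ 0 ∧ K.index ≤ n} := by
  haveI := finite_monoidHom (P := Equiv.Perm (Fin n)) hG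
  have key : ∀ K : {K : Subgroup G // K.index ≠ 0 ∧ K.index ≤ n},
      ∃ (ψ : G →* Equiv.Perm (Fin n)) (x : Fin n), ∀ g, g ∈ K.1 ↔ ψ g x = x := by
    rintro ⟨K, hK0, hKn⟩
    letI : Fintype (G ⧸ K) := K.fintypeOfIndexNeZero hK0
    have hcard : Fintype.card (G ⧸ K) ≤ Fintype.card (Fin n) := by
      rw [← Nat.card_eq_fintype_card, Fintype.card_fin, ← Subgroup.index_eq_card]
      exact hKn
    obtain ⟨ι⟩ := Function.Embedding.nonempty_of_card_le hcard
    refine ⟨(Equiv.Perm.viaEmbeddingHom ι).comp (MulAction.toPermHom G (G ⧸ K)),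
      ι ((1 : G) : G ⧸ K), fun g => ?_⟩
    have hmem : g ∈ K ↔ g • ((1 : G) : G ⧸ K) = ((1 : G) : G ⧸ K) := by
      rw [MulAction.Quotient.smul_mk, QuotientGroup.eq]
      simp
    simp only [MonoidHom.comp_apply, Equiv.Perm.viaEmbeddingHom_apply]
    rw [show ((Equiv.Perm.viaEmbedding (MulAction.toPermHom G (G ⧸ K) g) ι)
        (ι ((1 : G) : G ⧸ K))) = ι (g • ((1 : G) : G ⧸ K)) from
      Equiv.Perm.viaEmbedding_apply _ ι _]
    rw [hmem]
    exact ⟨fun h => by rw [h], fun h => ι.injective h⟩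
  choose ψ x hψ using key
  apply Finite.of_injective (fun K => (ψ K, x K))
  intro K K' h
  rw [Prod.mk.injEq] at h
  ext g
  rw [hψ K g, h.1, h.2, ← hψ K' g]

lemma exists_many_index_p {p : ℕ} (hp : p.Prime) (H : Type*) [Group H] (hH : Group.FG H)
    (hd : 1 ≤ dp p H) :
    ∃ e : ℕ, dp p H - 1 ≤ e ∧ ∃ f : (Fin e → ZMod p) → Subgroup H,
      Function.Injective f ∧ ∀ v, (f v).index = p := by
  classical
  haveI : Fact p.Prime := ⟨hp⟩
  haveI : NeZero p := ⟨hp.ne_zero⟩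
  set Q := H ⧸ modP p H with hQdef
  letI cgQ : CommGroup Q :=
    { (inferInstance : Group Q) with
      mul_comm := by
        intro a b
        induction a using QuotientGroup.induction_on with | H a =>
        induction b using QuotientGroup.induction_on with | H b =>
        show QuotientGroup.mk (a * b) = QuotientGroup.mk (b * a)
        rw [QuotientGroup.eq]
        exact Subgroup.subset_normalClosure (Or.inl ⟨b⁻¹, a⁻¹, by group⟩) }
  haveI modQ : Module (ZMod p) (Additive Q) := AddCommGroup.zmodModule (by
    intro x
    show (p • x).toMul = (0 : Additive Q).toMul
    rw [toMul_nsmul]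
    induction x.toMul using QuotientGroup.induction_on with | H a =>
    show QuotientGroup.mk (a ^ p) = 1
    rw [QuotientGroup.eq_one_iff]
    exact Subgroup.subset_normalClosure (Or.inr ⟨a, rfl⟩))
  -- closure to span
  have closure_to_span : ∀ s : Set Q, Subgroup.closure s = ⊤ →
      Submodule.span (ZMod p) (Additive.ofMul '' s) = (⊤ : Submodule (ZMod p) (Additive Q)) := by
    intro s hs
    have key : ∀ q : Q, q ∈ Subgroup.closure s →
        Additive.ofMul q ∈ Submodule.span (ZMod p) (Additive.ofMul '' s) := by
      intro q hq
      induction hq using Subgroup.closure_induction with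
      | mem y hy => exact Submodule.subset_span ⟨y, hy, rfl⟩
      | one => exact Submodule.zero_mem _
      | mul a b _ _ ha hb => exact Submodule.add_mem _ ha hb
      | inv a _ ha => exact Submodule.neg_mem _ ha
    rw [eq_top_iff]
    rintro x -
    exact key x.toMul (hs ▸ Subgroup.mem_top _)
  -- span to closure
  have span_to_closure : ∀ s : Set Q,
      Submodule.span (ZMod p) (Additive.ofMul '' s) = (⊤ : Submodule (ZMod p) (Additive Q)) →
      Subgroup.closure s = ⊤ := by
    intro s hs
    have key : ∀ x : Additive Q, x ∈ Submodule.span (ZMod p) (Additive.ofMul '' s) →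
        x.toMul ∈ Subgroup.closure s := by
      intro x hx
      induction hx using Submodule.span_induction with
      | mem y hy => obtain ⟨z, hz, rfl⟩ := hy; exact Subgroup.subset_closure hz
      | zero => exact Subgroup.one_mem _
      | add a b _ _ ha hb => exact Subgroup.mul_mem _ ha hb
      | smul c a _ ha =>
          have : (c • a) = (c.val : ZMod p) • a := by rw [ZMod.natCast_val, ZMod.cast_id]
          rw [this, Nat.cast_smul_eq_nsmul, toMul_nsmul]
          exact Subgroup.pow_mem _ ha _
    rw [eq_top_iff]
    rintro q -
    exact key (Additive.ofMul q) (hs ▸ Submodule.mem_top)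
  -- module finiteness
  haveI : Group.FG Q := by
    haveI := hH
    exact Group.fg_of_surjective (QuotientGroup.mk'_surjective (modP p H))
  haveI : Module.Finite (ZMod p) (Additive Q) := by
    obtain ⟨S, hS⟩ := (inferInstance : Group.FG Q).1
    exact ⟨⟨S.image Additive.ofMul, by
      rw [Finset.coe_image]; exact closure_to_span _ hS⟩⟩
  set d' := Module.finrank (ZMod p) (Additive Q) with hd'
  have hdp : dp p H ≤ d' := by
    haveI : Nontrivial (ZMod p) := by
      haveI : Fact (1 < p) := ⟨hp.one_lt⟩
      infer_instance
    set b := Module.finBasis (ZMod p) (Additive Q) with hb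
    have hinj : Function.Injective (fun i => (b i).toMul) :=
      fun i j hij => b.injective (by simpa using hij)
    refine Nat.sInf_le ⟨Finset.univ.image (fun i => (b i).toMul), ?_, ?_⟩
    · rw [Finset.card_image_of_injective _ hinj, Finset.card_univ, Fintype.card_fin]
    · apply span_to_closure
      rw [Finset.coe_image, Finset.coe_univ, Set.image_univ, ← Set.range_comp]
      have : (Additive.ofMul ∘ fun i => (b i).toMul) = b := rfl
      rw [this, b.span_eq]
  have hd1 : 1 ≤ d' := le_trans hd hdp
  refine ⟨d' - 1, Nat.sub_le_sub_right hdp 1, ?_⟩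
  have hde : d' = (d' - 1) + 1 := (Nat.succ_pred_eq_of_pos hd1).symm
  haveI : Nontrivial (ZMod p) := by
    haveI : Fact (1 < p) := ⟨hp.one_lt⟩
    infer_instance
  set b : Module.Basis (Fin ((d' - 1) + 1)) (ZMod p) (Additive Q) :=
    (Module.finBasis (ZMod p) (Additive Q)).reindex (finCongr hde) with hbdef
  set φ : (Fin (d' - 1) → ZMod p) → (Additive Q →ₗ[ZMod p] ZMod p) :=
    fun v => b.constr (ZMod p) (Fin.cases 1 v) with hφdef
  have hφb : ∀ v i, φ v (b i) = Fin.cases 1 v i := fun v i => b.constr_basis _ _ _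
  set χ : (Fin (d' - 1) → ZMod p) → (H →* Multiplicative (ZMod p)) :=
    fun v => (AddMonoidHom.toMultiplicativeRight (φ v).toAddMonoidHom).comp
      (QuotientGroup.mk' (modP p H)) with hχdef
  have hmem : ∀ v (h : H), h ∈ (χ v).ker ↔ φ v (Additive.ofMul ((QuotientGroup.mk' (modP p H)) h)) = 0 := by
    intro v h
    rw [MonoidHom.mem_ker]
    constructor
    · intro hh
      have := congrArg Multiplicative.toAdd hh
      exact this
    · intro hh
      show Multiplicative.ofAdd ((φ v).toAddMonoidHom (Additive.ofMul _)) = 1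
      rw [LinearMap.toAddMonoidHom_coe]
      rw [hh]
      rfl
  refine ⟨fun v => (χ v).ker, ?_, ?_⟩
  · -- injectivity
    intro v w hvw
    funext j
    set a : Additive Q := b j.succ - (v j) • b 0 with ha
    have hva : φ v a = 0 := by
      rw [ha, map_sub, map_smul, hφb, hφb]
      simp
    obtain ⟨h, hh⟩ := QuotientGroup.mk'_surjective (modP p H) a.toMul
    have hmk : Additive.ofMul ((QuotientGroup.mk' (modP p H)) h) = a := by
      show Additive.ofMul ((QuotientGroup.mk' (modP p H)) h) = a
      rw [hh]
      rfl
    have h1 : h ∈ (χ v).ker := by rw [hmem, hmk]; exact hva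
    have hvw' : (χ v).ker = (χ w).ker := hvw
    have h2 : h ∈ (χ w).ker := hvw' ▸ h1
    have h3 : φ w a = 0 := by rw [← hmk]; exact (hmem w h).mp h2
    rw [ha, map_sub, map_smul, hφb, hφb] at h3
    simp only [Fin.cases_succ, Fin.cases_zero, smul_eq_mul, mul_one] at h3
    exact (sub_eq_zero.mp h3).symm
  · -- index
    intro v
    have hsurj : Function.Surjective (χ v) := by
      intro c
      obtain ⟨h, hh⟩ := QuotientGroup.mk'_surjective (modP p H) ((c.toAdd • b 0).toMul)
      refine ⟨h, ?_⟩
      show Multiplicative.ofAdd ((φ v).toAddMonoidHom (Additive.ofMul ((QuotientGroup.mk' (modP p H)) h))) = c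
      rw [hh, LinearMap.toAddMonoidHom_coe]
      have : Additive.ofMul (Additive.toMul (c.toAdd • b 0)) = c.toAdd • b 0 := rfl
      rw [this, map_smul, hφb]
      simp
    rw [Subgroup.index_ker, MonoidHom.range_eq_top.mpr hsurj,
      Nat.card_congr Subgroup.topEquiv.toEquiv, Nat.card_congr Multiplicative.toAdd,
      Nat.card_zmod]

/-- If a finitely generated `G` has an infinite nested sequence of finite-index subgroups
with linear growth of mod `p` homology and bounded index jumps, then `G` has at least
exponential subgroup growth. -/
theorem at_least_exponential_subgroup_growth (G : Type*) [Group G] (hG : Group.FG G)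
    (p : ℕ) (hp : p.Prime) (Gs : ℕ → Subgroup G)
    (hnested : ∀ i, Gs (i + 1) < Gs i)
    (hfin : ∀ i, (Gs i).index ≠ 0)
    (hlin : ∃ lam : ℝ, 0 < lam ∧ ∀ i, lam ≤ (dp p (Gs i) : ℝ) / ((Gs i).index : ℝ))
    (k : ℕ) (hk : ∀ i, (Gs (i + 1)).relIndex (Gs i) ≤ k) :
    ∃ c : ℝ, 1 < c ∧ ∃ N : ℕ, ∀ n ≥ N, c ^ n ≤ (sn G n : ℝ) := by

  classical
  haveI : NeZero p := ⟨hp.ne_zero⟩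
  obtain ⟨lam, hlam, hlb⟩ := hlin
  set m : ℕ → ℕ := fun i => (Gs i).index with hmdef
  have hm0 : ∀ i, 0 < m i := fun i => Nat.pos_of_ne_zero (hfin i)
  have hdp_pos : ∀ i, 1 ≤ dp p ↥(Gs i) := by
    intro i
    rcases Nat.eq_zero_or_pos (dp p ↥(Gs i)) with h | h
    · exfalso
      have := hlb i
      rw [h] at this
      simp only [Nat.cast_zero, zero_div] at this
      linarith
    · exact h
  have hdp_ge : ∀ i, lam * m i ≤ (dp p ↥(Gs i) : ℝ) := by
    intro i
    have hmpos : (0 : ℝ) < (m i : ℝ) := by exact_mod_cast hm0 i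
    have := hlb i
    rw [le_div_iff₀ hmpos] at this
    exact this
  have hstep : ∀ i, m (i + 1) ≤ k * m i := by
    intro i
    have h1 : (Gs (i+1)).relIndex (Gs i) * (Gs i).index = (Gs (i+1)).index :=
      Subgroup.relIndex_mul_index (hnested i).le
    calc m (i+1) = (Gs (i+1)).relIndex (Gs i) * m i := h1.symm
    _ ≤ k * m i := Nat.mul_le_mul_right _ (hk i)
  have hsm : StrictMono m := by
    apply strictMono_nat_of_lt_succ
    intro i
    haveI : (Gs (i+1)).FiniteIndex := ⟨hfin (i+1)⟩
    exact Subgroup.index_strictAnti (hnested i)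
  have hk0 : 0 < k := by
    rcases Nat.eq_zero_or_pos k with h | h
    · exfalso
      have := hstep 0
      rw [h, Nat.zero_mul, Nat.le_zero] at this
      exact absurd this (hm0 1).ne'
    · exact h
  have hp2 : 2 ≤ p := hp.two_le
  -- the key counting bound
  have key : ∀ i n, p * m i ≤ n →
      (p : ℝ) ^ (dp p ↥(Gs i) - 1) ≤ (sn G n : ℝ) := by
    intro i n hn
    haveI : (Gs i).FiniteIndex := ⟨hfin i⟩
    haveI fgi : Group.FG ↥(Gs i) := Subgroup.fg_of_index_ne_zero (Gs i)
    obtain ⟨e, he, f, hfinj, hfidx⟩ := exists_many_index_p hp ↥(Gs i) fgi (hdp_pos i)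
    haveI : Finite {K : Subgroup G // K.index ≠ 0 ∧ K.index ≤ n} :=
      finite_subgroup_index_le hG n
    have hidx : ∀ v, ((f v).map (Gs i).subtype).index = p * m i := by
      intro v
      rw [Subgroup.index_map_subtype, hfidx]
    have hcard : p ^ e ≤ sn G n := by
      have hinj : Function.Injective
          (fun v : Fin e → ZMod p =>
            (⟨(f v).map (Gs i).subtype, by rw [hidx]; exact Nat.mul_ne_zero hp.pos.ne' (hm0 i).ne', by rw [hidx]; exact hn⟩ :
              {K : Subgroup G // K.index ≠ 0 ∧ K.index ≤ n})) := by
        intro v w hvw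
        apply hfinj
        exact Subgroup.map_injective (Gs i).subtype_injective (congrArg Subtype.val hvw)
      have := Nat.card_le_card_of_injective _ hinj
      rw [Nat.card_eq_fintype_card, Fintype.card_fun, Fintype.card_fin] at this
      rw [show Fintype.card (ZMod p) = p from ZMod.card p] at this
      exact this
    calc (p : ℝ) ^ (dp p ↥(Gs i) - 1) ≤ (p : ℝ) ^ e := by
          apply pow_le_pow_right₀ (by exact_mod_cast hp.one_le) he
    _ = ((p ^ e : ℕ) : ℝ) := by push_cast; ring
    _ ≤ (sn G n : ℝ) := by exact_mod_cast hcard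
  -- set up constants
  set P : ℝ := (p : ℝ) with hPdef
  have hP1 : (1 : ℝ) < P := by rw [hPdef]; exact_mod_cast hp.one_lt
  set ε : ℝ := lam / (2 * p * k) with hεdef
  have hpk : (0 : ℝ) < (p : ℝ) * k := by positivity
  have hε : 0 < ε := by
    apply div_pos hlam
    positivity
  refine ⟨P ^ ε, ?_, max (p * m 0) ⌈1 / ε⌉₊, ?_⟩
  · rw [Real.one_lt_rpow_iff_of_pos (by positivity)]
    exact Or.inl ⟨hP1, hε⟩
  intro n hn
  have hn0 : p * m 0 ≤ n := le_trans (le_max_left _ _) hn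
  have hnε : 1 ≤ ε * n := by
    have h1 : (⌈1 / ε⌉₊ : ℕ) ≤ n := le_trans (le_max_right _ _) hn
    have h2 : 1 / ε ≤ (n : ℝ) := le_trans (Nat.le_ceil _) (by exact_mod_cast h1)
    rw [div_le_iff₀ hε] at h2
    linarith [mul_comm ε (n : ℝ)]
  have hn1 : 1 ≤ n := by
    have : 0 < p * m 0 := Nat.mul_pos hp.pos (hm0 0)
    omega
  -- find the right i
  set i := Nat.findGreatest (fun i => p * m i ≤ n) n with hi
  have hPi : p * m i ≤ n :=
    Nat.findGreatest_spec (P := fun j => p * m j ≤ n) (Nat.zero_le n) hn0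
  have hin : i < n := by
    have : i ≤ m i := hsm.le_apply
    nlinarith [hm0 i, hPi, hp2]
  have hPin : n < p * m (i + 1) := by
    by_contra h
    push_neg at h
    exact Nat.findGreatest_is_greatest (Nat.lt_succ_self i) (by omega) h
  -- chain of inequalities
  have hmi : (n : ℝ) < (p : ℝ) * k * (m i) := by
    have h1 : n + 1 ≤ p * m (i+1) := hPin
    have h2 : p * m (i+1) ≤ p * (k * m i) := Nat.mul_le_mul_left p (hstep i)
    have : n + 1 ≤ p * (k * m i) := le_trans h1 h2
    have := (Nat.lt_of_succ_le this)
    push_cast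
    exact_mod_cast by exact_mod_cast Nat.cast_lt.mpr this |>.trans_eq (by push_cast; ring)
  set d : ℕ := dp p ↥(Gs i) with hd
  have hd1 : 1 ≤ d := hdp_pos i
  have hdge : 2 * ε * n < (d : ℝ) := by
    have h1 : lam * m i ≤ (d : ℝ) := hdp_ge i
    have h2 : lam * (n / ((p : ℝ) * k)) < lam * m i := by
      apply mul_lt_mul_of_pos_left _ hlam
      rw [div_lt_iff₀ hpk]
      linarith [hmi]
    have h3 : 2 * ε * n = lam * n / ((p : ℝ) * k) := by
      rw [hεdef]; field_simp
    rw [h3]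
    calc lam * n / ((p:ℝ) * k) = lam * (n / ((p:ℝ)*k)) := by ring
    _ < lam * m i := h2
    _ ≤ (d : ℝ) := h1
  have hexp : ε * n ≤ ((d - 1 : ℕ) : ℝ) := by
    rw [Nat.cast_sub hd1]
    push_cast
    nlinarith [hnε, hdge]
  calc (P ^ ε) ^ n = P ^ (ε * n) := by
        rw [← Real.rpow_natCast (P ^ ε) n, ← Real.rpow_mul (by positivity)]
  _ ≤ P ^ (((d - 1 : ℕ) : ℝ)) := by
        apply Real.rpow_le_rpow_of_exponent_le (le_of_lt hP1) hexp
  _ = (p : ℝ) ^ (d - 1 : ℕ) := by rw [Real.rpow_natCast]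
  _ ≤ (sn G n : ℝ) := key i n hPi
end

section
/- Let G be a finitely generated group, H a subgroup of finite index m = [G:H], and n a positive integer. Then for any fixed subgroup L of H of index n in H, the number of subgroups K of G with K ∩ H = L is at most (mn)^{log_2 m}. -/
/-- A subgroup `K` is generated over a finite-index subgroup `M ≤ K` by at most
`log₂ [K : M]` additional elements. -/
lemma exists_finset_gen_aux {G : Type*} [Group G] :
    ∀ N : ℕ, ∀ M K : Subgroup G, M ≤ K → M.relIndex K ≠ 0 → M.relIndex K ≤ N →
      ∃ S : Finset G, ↑S ⊆ (K : Set G) ∧ S.card ≤ Nat.log 2 (M.relIndex K) ∧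
        M ⊔ Subgroup.closure ↑S = K := by
  classical
  intro N
  induction N using Nat.strong_induction_on with
  | _ N ih =>
    intro M K hMK hne hle
    by_cases hKM : K ≤ M
    · refine ⟨∅, by simp, by simp, ?_⟩
      simp [le_antisymm hMK hKM]
    · obtain ⟨x, hxK, hxM⟩ : ∃ x, x ∈ K ∧ x ∉ M := by
        by_contra h
        push_neg at h
        exact hKM h
      set M' : Subgroup G := M ⊔ Subgroup.closure {x} with hM'
      have hMM' : M ≤ M' := le_sup_left
      have hM'K : M' ≤ K := by
        rw [hM']
        exact sup_le hMK ((Subgroup.closure_le K).2 (by simpa using hxK))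
      have hmul : M.relIndex M' * M'.relIndex K = M.relIndex K :=
        Subgroup.relIndex_mul_relIndex M M' K hMM' hM'K
      have hM'ne : M'.relIndex K ≠ 0 := by
        intro h; rw [h, mul_zero] at hmul; exact hne hmul.symm
      have hMM'ne : M.relIndex M' ≠ 0 := by
        intro h; rw [h, zero_mul] at hmul; exact hne hmul.symm
      have hxM' : x ∈ M' := by
        rw [hM']
        exact (le_sup_right : Subgroup.closure {x} ≤ M ⊔ Subgroup.closure {x})
          (Subgroup.subset_closure (Set.mem_singleton x))
      have hMM'1 : M.relIndex M' ≠ 1 := by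
        intro h1
        exact hxM (Subgroup.relIndex_eq_one.1 h1 hxM')
      have hMM'2 : 2 ≤ M.relIndex M' := by omega
      have hhalf : M'.relIndex K * 2 ≤ M.relIndex K := by
        calc M'.relIndex K * 2 ≤ M'.relIndex K * M.relIndex M' :=
              Nat.mul_le_mul_left _ hMM'2
          _ = M.relIndex K := by rw [mul_comm]; exact hmul
      have hlt : M'.relIndex K < M.relIndex K := by
        have h1 : 1 ≤ M'.relIndex K := Nat.one_le_iff_ne_zero.2 hM'ne
        omega
      obtain ⟨S', hS'K, hS'card, hS'gen⟩ :=
        ih (M'.relIndex K) (lt_of_lt_of_le hlt hle) M' K hM'K hM'ne le_rfl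
      refine ⟨insert x S', ?_, ?_, ?_⟩
      · rw [Finset.coe_insert]
        exact Set.insert_subset hxK hS'K
      · have hlog : Nat.log 2 (M'.relIndex K) + 1 ≤ Nat.log 2 (M.relIndex K) := by
          have := Nat.log_mul_base (b := 2) (n := M'.relIndex K) one_lt_two hM'ne
          calc Nat.log 2 (M'.relIndex K) + 1 = Nat.log 2 (M'.relIndex K * 2) := this.symm
            _ ≤ Nat.log 2 (M.relIndex K) := Nat.log_mono_right hhalf
        calc (insert x S').card ≤ S'.card + 1 := Finset.card_insert_le _ _
          _ ≤ Nat.log 2 (M'.relIndex K) + 1 := by omega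
          _ ≤ Nat.log 2 (M.relIndex K) := hlog
      · rw [Finset.coe_insert, Set.insert_eq, Subgroup.closure_union, ← sup_assoc]
        rw [← hM'] at *
        exact hS'gen

/-- Counting bound: if `H ≤ G` has finite index `m` and `L` is a subgroup of `H` of index
`n` in `H`, then the number of subgroups `K` of `G` with `K ∩ H = L` is at most
`(mn)^{log₂ m}`. -/
theorem card_subgroups_with_fixed_intersection (G : Type*) [Group G] (hG : Group.FG G)
    (H : Subgroup G) (m : ℕ) (hm : H.index = m) (hm0 : m ≠ 0)
    (n : ℕ) (hn : 0 < n) (L : Subgroup ↥H) (hL : L.index = n) :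
    (Nat.card {K : Subgroup G // K.subgroupOf H = L} : ℝ) ≤
      ((m * n : ℕ) : ℝ) ^ Real.logb 2 m := by
  classical
  set L' : Subgroup G := L.map H.subtype with hL'
  have hL'H : L' ≤ H := Subgroup.map_subtype_le L
  have hL'sub : L'.subgroupOf H = L := by
    rw [hL', Subgroup.subgroupOf]
    exact Subgroup.comap_map_eq_self_of_injective H.subtype_injective L
  have hL'rel : L'.relIndex H = n := by
    rw [Subgroup.relIndex, hL'sub, hL]
  have hL'index : L'.index = n * m := by
    rw [← Subgroup.relIndex_mul_index hL'H, hL'rel, hm]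
  have hmn0 : n * m ≠ 0 := mul_ne_zero hn.ne' hm0
  have hquot : Nat.card (G ⧸ L') = n * m := by
    rw [← hL'index]; rfl
  have hfin : Finite (G ⧸ L') := Nat.finite_of_card_ne_zero (by rw [hquot]; exact hmn0)
  set r : ℕ := Nat.log 2 m with hr
  -- key: each K in the subtype is encoded by a tuple of r cosets
  have key : ∀ K : {K : Subgroup G // K.subgroupOf H = L},
      ∃ f : Fin r → G ⧸ L',
        (K : Subgroup G) = L' ⊔ Subgroup.closure {g : G | ∃ i, (g : G ⧸ L') = f i} := by
    rintro ⟨K, hK⟩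
    have hL'eq : L' = K ⊓ H := by
      rw [hL', ← hK]
      exact Subgroup.subgroupOf_map_subtype K H
    have hL'K : L' ≤ K := hL'eq.le.trans inf_le_left
    have hrelHK : L'.relIndex K = H.relIndex K := by
      rw [hL'eq, inf_comm, Subgroup.inf_relIndex_right]
    have hHtop : H.relIndex ⊤ = m := by rw [Subgroup.relIndex_top_right, hm]
    have hHne : H.relIndex K ≠ 0 := by
      intro h
      have := Subgroup.index_eq_zero_of_relIndex_eq_zero h
      rw [hm] at this; exact hm0 this
    have hHle : H.relIndex K ≤ m := by
      have := Subgroup.relIndex_le_of_le_right (le_top : K ≤ ⊤)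
        (by rw [hHtop]; exact hm0)
      rwa [hHtop] at this
    obtain ⟨S, hSK, hScard, hSgen⟩ := exists_finset_gen_aux (L'.relIndex K) L' K hL'K
      (by rw [hrelHK]; exact hHne) le_rfl
    have hScard' : S.card ≤ r := by
      calc S.card ≤ Nat.log 2 (L'.relIndex K) := hScard
        _ ≤ Nat.log 2 m := by rw [hrelHK]; exact Nat.log_mono_right hHle
    set l := S.toList with hl
    have hlen : l.length ≤ r := by rw [hl, Finset.length_toList]; exact hScard'
    refine ⟨fun i => if h : (i : ℕ) < l.length then
      QuotientGroup.mk (l.get ⟨i, h⟩) else QuotientGroup.mk 1, ?_⟩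
    simp only
    apply le_antisymm
    · rw [← hSgen]
      apply sup_le (le_sup_left)
      refine le_trans ?_ le_sup_right
      apply Subgroup.closure_mono
      intro s hs
      obtain ⟨j, hj⟩ := List.get_of_mem (Finset.mem_toList.2 hs)
      refine ⟨⟨(j : ℕ), lt_of_lt_of_le j.2 hlen⟩, ?_⟩
      rw [dif_pos (show ((j : ℕ) : ℕ) < l.length from j.2)]
      rw [← hj]
    · apply sup_le hL'K
      rw [Subgroup.closure_le]
      rintro g ⟨i, hi⟩
      by_cases h : (i : ℕ) < l.length
      · rw [dif_pos h] at hi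
        have hsS : l.get ⟨i, h⟩ ∈ S := Finset.mem_toList.1 (l.get_mem ⟨i, h⟩)
        set s := l.get ⟨i, h⟩ with hs
        have hsK : s ∈ K := hSK hsS
        have : g⁻¹ * s ∈ L' := QuotientGroup.eq.1 hi
        have : g = s * (g⁻¹ * s)⁻¹ := by group
        rw [this]
        exact K.mul_mem hsK (K.inv_mem (hL'K ‹g⁻¹ * s ∈ L'›))
      · rw [dif_neg h] at hi
        have : g⁻¹ * 1 ∈ L' := QuotientGroup.eq.1 hi
        rw [mul_one] at this
        have := hL'K (L'.inv_mem this)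
        rwa [inv_inv] at this
  choose f hf using key
  have hinj : Function.Injective f := by
    intro K K' h
    ext1
    rw [hf K, hf K', h]
  have hcard : Nat.card {K : Subgroup G // K.subgroupOf H = L} ≤ (m * n) ^ r := by
    calc Nat.card {K : Subgroup G // K.subgroupOf H = L}
        ≤ Nat.card (Fin r → G ⧸ L') := Nat.card_le_card_of_injective f hinj
      _ = (n * m) ^ r := by rw [Nat.card_fun, hquot, Nat.card_eq_fintype_card, Fintype.card_fin]
      _ = (m * n) ^ r := by rw [mul_comm n m]
  have h1 : (1 : ℝ) ≤ ((m * n : ℕ) : ℝ) := by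
    have : 1 ≤ m * n := Nat.one_le_iff_ne_zero.2 (by rwa [mul_comm] at hmn0)
    exact_mod_cast this
  calc (Nat.card {K : Subgroup G // K.subgroupOf H = L} : ℝ)
      ≤ (((m * n) ^ r : ℕ) : ℝ) := by exact_mod_cast hcard
    _ = ((m * n : ℕ) : ℝ) ^ (r : ℝ) := by
        push_cast
        rw [Real.rpow_natCast]
    _ ≤ ((m * n : ℕ) : ℝ) ^ Real.logb 2 m := by
        apply Real.rpow_le_rpow_of_exponent_le h1
        rw [hr]
        exact Real.natLog_le_logb m 2
end
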